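/- Let W = δ(U(π,u,yu)) ∈ T_I(G) satisfy ζ(W) = δ(U(π̂,u,ŷu)) ≠ W, where the ζ-move swaps terminal subpaths of π_{u_j}, π_{u_{j'}} at the central vertex of G_{J_p}. Then cdncross(ζ(W)) = cdncross(W) if the triple (π_{u_j},π_{u_{j'}},p) is proper, cdncross(ζ(W)) = cdncross(W) − 1 if it is a defective noncrossing, and cdncross(ζ(W)) = cdncross(W) + 1 if it is a defective crossing. -/

import Mathlib

/- Common combinatorial setup: star networks, covering path families,
   crossing/noncrossing statistics, and the base ring ℤ[q^{1/2},q^{-1/2}]. -/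

open Equiv Finset
open scoped Classical

noncomputable section

/-- The ring `ℤ[q^{1/2}, q^{-1/2}]`, realized as Laurent polynomials in the
variable `q^{1/2}` (so the exponent-`k` monomial is `q^{k/2}`). -/
abbrev R2 : Type := LaurentPolynomial ℤ

/-- `q^{k/2}`. -/
def Qp (k : ℤ) : R2 := LaurentPolynomial.T k

/-- `q`. -/
def qq : R2 := LaurentPolynomial.T 2

/-- Coxeter length of a permutation, i.e. its inversion number. -/
def len {n : ℕ} (w : Perm (Fin n)) : ℕ :=
  ((univ : Finset (Fin n × Fin n)).filter fun p => p.1 < p.2 ∧ w p.2 < w p.1).card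

/-- Membership in the interval `J = [a,b] ⊆ [n]`. -/
def memJ {n : ℕ} (J : Fin n × Fin n) (i : Fin n) : Prop := J.1 ≤ i ∧ i ≤ J.2

/-- Membership in the subgroup `S_J ≤ S_n` generated by the adjacent
transpositions `s_a, …, s_{b-1}` of the interval `J = [a,b]`; equivalently,
the permutations supported on `[a,b]`. -/
def inSJ {n : ℕ} (J : Fin n × Fin n) (w : Perm (Fin n)) : Prop :=
  ∀ i, w i ≠ i → memJ J i

/-- A path family covering the star network `G_{J_1} ∘ ⋯ ∘ G_{J_m}` is
faithfully encoded by the permutation of the wire positions realized at each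
simple-star factor: at factor `p` the paths whose current positions lie in
`J_p` pass through the central vertex and are permuted arbitrarily within
`J_p` (every entering and leaving edge being used exactly once), while all
other paths use their unique horizontal edge.  Thus a covering family is a
sequence `vs` of permutations with `vs p` supported on `J_p`. -/
def IsPathFamily {n m : ℕ} (Js : Fin m → Fin n × Fin n)
    (vs : Fin m → Perm (Fin n)) : Prop :=
  ∀ p, inSJ (Js p) (vs p)

/-- The position of the path starting at source `i` just before factor `k`
(as a permutation of sources). -/
def posAt {n m : ℕ} (vs : Fin m → Perm (Fin n)) (k : ℕ) : Perm (Fin n) :=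
  (((List.ofFn vs).take k).reverse).prod

/-- The type of a covering path family: the path starting at source `i`
terminates at sink `typeOf vs i`. -/
def typeOf {n m : ℕ} (vs : Fin m → Perm (Fin n)) : Perm (Fin n) := posAt vs m

/-- The path from source `i` passes through the central vertex of the factor
`G_{J_p}`. -/
def centeredAt {n m : ℕ} (Js : Fin m → Fin n × Fin n) (vs : Fin m → Perm (Fin n))
    (p : Fin m) (i : Fin n) : Prop :=
  (Js p).1 < (Js p).2 ∧ memJ (Js p) (posAt vs p i)

/-- The paths from sources `i` and `j` both pass through the central vertex of
the factor `G_{J_p}`. -/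
def meetAt {n m : ℕ} (Js : Fin m → Fin n × Fin n) (vs : Fin m → Perm (Fin n))
    (p : Fin m) (i j : Fin n) : Prop :=
  centeredAt Js vs p i ∧ centeredAt Js vs p j

/-- The triple `(π_i, π_j, p)` is a crossing: the two paths intersect at the
central vertex of `G_{J_p}` and cross there. -/
def crossingAt {n m : ℕ} (Js : Fin m → Fin n × Fin n) (vs : Fin m → Perm (Fin n))
    (p : Fin m) (i j : Fin n) : Prop :=
  meetAt Js vs p i j ∧
    ¬ ((posAt vs p i < posAt vs p j) ↔ (posAt vs (p.1 + 1) i < posAt vs (p.1 + 1) j))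

/-- `cross(π)`: the number of crossings of the path family. -/
def crossNum {n m : ℕ} (Js : Fin m → Fin n × Fin n)
    (vs : Fin m → Perm (Fin n)) : ℕ :=
  ((univ : Finset ((Fin n × Fin n) × Fin m)).filter fun x =>
    x.1.1 < x.1.2 ∧ crossingAt Js vs x.2 x.1.1 x.1.2).card

/-- The triple `(π_i, π_j, p)` is a noncrossing with `π_i` entering and
leaving the central vertex of `G_{J_p}` below `π_j`. -/
def noncrossBelow {n m : ℕ} (Js : Fin m → Fin n × Fin n) (vs : Fin m → Perm (Fin n))
    (p : Fin m) (i j : Fin n) : Prop :=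
  meetAt Js vs p i j ∧
    posAt vs p i < posAt vs p j ∧ posAt vs (p.1 + 1) i < posAt vs (p.1 + 1) j

/-- `incross(U)` for a tableau `U` containing the paths of `π`, recorded via
the function `col` assigning to each path (index) the index of the column of
`U` containing it: the number of inverted noncrossings, i.e. noncrossings
`(π_i, π_j, p)` (with `π_i` below `π_j`) such that `π_j` lies in an earlier
column of `U` than `π_i`. -/
def incrossNum {n m : ℕ} (Js : Fin m → Fin n × Fin n) (vs : Fin m → Perm (Fin n))
    (col : Fin n → ℕ) : ℕ :=
  ((univ : Finset ((Fin n × Fin n) × Fin m)).filter fun x =>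
    noncrossBelow Js vs x.2 x.1.1 x.1.2 ∧ col x.1.2 < col x.1.1).card

/-- The number of crossings of the two paths `π_i, π_j` strictly before the
factor `G_{J_p}`. -/
def crossBefore {n m : ℕ} (Js : Fin m → Fin n × Fin n) (vs : Fin m → Perm (Fin n))
    (p : Fin m) (i j : Fin n) : ℕ :=
  ((univ : Finset (Fin m)).filter fun k => k < p ∧ crossingAt Js vs k i j).card

/-- The triple `(π_i, π_j, p)` is defective: the paths meet at the central
vertex of `G_{J_p}` having previously crossed an odd number of times. -/
def defectiveAt {n m : ℕ} (Js : Fin m → Fin n × Fin n) (vs : Fin m → Perm (Fin n))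
    (p : Fin m) (i j : Fin n) : Prop :=
  meetAt Js vs p i j ∧ Odd (crossBefore Js vs p i j)

/-- `dfct(π)`: the number of defective triples of the path family. -/
def dfctNum {n m : ℕ} (Js : Fin m → Fin n × Fin n)
    (vs : Fin m → Perm (Fin n)) : ℕ :=
  ((univ : Finset ((Fin n × Fin n) × Fin m)).filter fun x =>
    x.1.1 < x.1.2 ∧ defectiveAt Js vs x.2 x.1.1 x.1.2).card

/-- `cdncross(W)`: the number of defective noncrossings between pairs of
paths appearing in the same column of the tableau recorded by `col`. -/
def cdncrossNum {n m : ℕ} (Js : Fin m → Fin n × Fin n) (vs : Fin m → Perm (Fin n))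
    (col : Fin n → ℕ) : ℕ :=
  ((univ : Finset ((Fin n × Fin n) × Fin m)).filter fun x =>
    x.1.1 < x.1.2 ∧ defectiveAt Js vs x.2 x.1.1 x.1.2 ∧
      ¬ crossingAt Js vs x.2 x.1.1 x.1.2 ∧ col x.1.1 = col x.1.2).card

/-- The adjacent transposition `s_{i+1}` (0-indexed: swaps positions `i` and
`i+1`). -/
def swp {n : ℕ} (i : ℕ) (h : i + 1 < n) : Perm (Fin n) :=
  Equiv.swap ⟨i, by omega⟩ ⟨i + 1, h⟩

end
/- Young subgroups, minimal coset representatives, the induced sign character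
`ε_q^λ`, and column-strict tableaux (encoded by column assignments). -/

noncomputable section
open Equiv Finset
open scoped Classical

/-- Given a composition `lam = (λ_1, …, λ_r)` of `n`, the index of the block
`B_k = [λ_1 + ⋯ + λ_{k-1} + 1, λ_1 + ⋯ + λ_k]` containing the (0-indexed)
position `i`. -/
def blockIdx (lam : List ℕ) (i : ℕ) : ℕ :=
  ((List.range lam.length).filter fun k => (lam.take (k + 1)).sum ≤ i).length

/-- Membership in the Young subgroup `S_λ`: the permutations preserving each
block `B_k`. -/
def inYoung {n : ℕ} (lam : List ℕ) (w : Perm (Fin n)) : Prop :=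
  ∀ i : Fin n, blockIdx lam ((w i : Fin n) : ℕ) = blockIdx lam (i : ℕ)

/-- `u` is the minimum-length representative of its coset `S_λ u`
(in the paper's conventions, of the left coset `u S_λ` used in the
factorization `w = w_- w^*`): `u` has no inversions whose two values lie in a
common block. -/
def isMinRep {n : ℕ} (lam : List ℕ) (u : Perm (Fin n)) : Prop :=
  ∀ i j : Fin n, i < j →
    blockIdx lam ((u i : Fin n) : ℕ) = blockIdx lam ((u j : Fin n) : ℕ) →
      u i < u j

/-- The induced sign character `ε_q^λ = sgn ↑_{H_λ(q)}^{H_n(q)}`, computed in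
the natural basis: `H_n(q)` is a free right `H_λ(q)`-module with basis
`{T_u}` indexed by the minimum-length coset representatives, every basis
element factors as `T_{τ∘u} = T_u T_τ` with `τ ∈ S_λ`, the sign character
sends `T_τ` to `(-1)^{ℓ(τ)}`, and the character of the induced module
`H_n(q) ⊗_{H_λ(q)} sgn` is obtained by summing the diagonal coefficients. -/
def epsChar {n : ℕ} {H : Type*} [Ring H] [Algebra R2 H] (lam : List ℕ)
    (T : Module.Basis (Perm (Fin n)) R2 H) (h : H) : R2 :=
  ∑ u ∈ (univ : Finset (Perm (Fin n))).filter (fun u => isMinRep lam u),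
    ∑ τ ∈ (univ : Finset (Perm (Fin n))).filter (fun τ => inYoung lam τ),
      (-1 : R2) ^ len τ * T.repr (h * T u) (τ * u)

/-- A column-strict tableau of shape `λᵗ` (whose columns therefore have
lengths `λ_1, …, λ_r`) filled with the paths of a covering path family of
type `typeOf vs`, encoded by the assignment `f` sending each path to the
index of its column: column `k` must have `λ_k` entries, and since the
entries of a column are arranged bottom-to-top in increasing order of source
index, column-strictness says that the sink indices of the paths in a common
column also increase with the source indices. -/
def IsColStrictAssign {n m : ℕ} (lam : List ℕ) (vs : Fin m → Perm (Fin n))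
    (f : Fin n → Fin lam.length) : Prop :=
  (∀ k : Fin lam.length,
      ((univ : Finset (Fin n)).filter fun i => f i = k).card = lam.get k) ∧
    ∀ i j : Fin n, f i = f j → i < j → typeOf vs i < typeOf vs j

end
/- The data of the involution ζ on the tableau set T_I.  An ordered set
partition `I = (I_1, …, I_r)` of `[n]` of type `λ` is encoded by the
permutation `u = u(I)` (increasing on each block `B_k`, with `I_k = u(B_k)`);
an element `U(π, u, yu)` of `U_I(G)` is encoded by the covering path family
`π` (with `typeOf π = u ∘ y ∘ u⁻¹` for some `y ∈ S_λ`); its image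
`W = δ(U(π,u,yu)) ∈ T_I(G)` is the tableau of shape `λᵗ` whose `k`-th column
contains the paths with sources in `I_k`, so the column of the path `i` in
`W` is `colOf lam u i`. -/

noncomputable section
open Equiv Finset
open scoped Classical

/-- The column of the path `π_i` in the tableau `δ(U(π,u,yu)) ∈ T_I`. -/
def colOf {n : ℕ} (lam : List ℕ) (u : Perm (Fin n)) (i : Fin n) : ℕ :=
  blockIdx lam ((u⁻¹ i : Fin n) : ℕ)

/-- Column `c` of the tableau `δ(U(π,u,yu))` is column-strict: its sink
indices increase (bottom to top) together with its source indices. -/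
def colStrictCol {n m : ℕ} (lam : List ℕ) (u : Perm (Fin n))
    (vs : Fin m → Perm (Fin n)) (c : ℕ) : Prop :=
  ∀ i i' : Fin n, colOf lam u i = c → colOf lam u i' = c → i < i' →
    typeOf vs i < typeOf vs i'

/-- The path family obtained by swapping the terminal subpaths of the paths
from sources `i` and `i'`, beginning at the central vertex of the factor
`G_{J_p}`: the permutation realized at factor `p` is composed with the
transposition of the two leaving positions. -/
def zetaSwap {n m : ℕ} (vs : Fin m → Perm (Fin n)) (p : Fin m)
    (i i' : Fin n) : Fin m → Perm (Fin n) :=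
  fun k => if k = p then
    Equiv.swap (posAt vs (p.1 + 1) i) (posAt vs (p.1 + 1) i') * vs p
  else vs k

/-- The data entering the definition of the involution `ζ = ζ_I` at a
non-column-strict tableau `W = δ(U(π,u,yu)) ∈ T_I(G)`:
`tc` is the greatest index of a non-column-strict column of `W`; `p` is the
greatest index such that at least two paths of column `tc` pass through the
interior vertex of `G_{J_p}`; and `j, j'` are the two positions in block `tc`
whose paths `π_{u_j}, π_{u_{j'}}` (through that vertex) have the
right-to-left lexicographically greatest pair of sink indices, normalized so
that the sink of `π_{u_{j'}}` is the larger.  Then `ζ(W)` is obtained from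
`W` by replacing `π` with `zetaSwap vs p (u j) (u j')`. -/
structure ZetaData {n m : ℕ} (Js : Fin m → Fin n × Fin n) (lam : List ℕ)
    (u : Perm (Fin n)) (vs : Fin m → Perm (Fin n)) : Type where
  tc : ℕ
  p : Fin m
  j : Fin n
  j' : Fin n
  htc : ¬ colStrictCol lam u vs tc
  htcMax : ∀ c : ℕ, tc < c → colStrictCol lam u vs c
  hpMeet : ∃ i i' : Fin n, i ≠ i' ∧ colOf lam u i = tc ∧ colOf lam u i' = tc ∧
    centeredAt Js vs p i ∧ centeredAt Js vs p i'
  hpMax : ∀ p' : Fin m, p < p' →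
    ¬ ∃ i i' : Fin n, i ≠ i' ∧ colOf lam u i = tc ∧ colOf lam u i' = tc ∧
      centeredAt Js vs p' i ∧ centeredAt Js vs p' i'
  hne : j ≠ j'
  hjcol : blockIdx lam (j : ℕ) = tc
  hjcol' : blockIdx lam (j' : ℕ) = tc
  hjcent : centeredAt Js vs p (u j)
  hjcent' : centeredAt Js vs p (u j')
  hord : typeOf vs (u j) < typeOf vs (u j')
  hmax : ∀ k k' : Fin n, k ≠ k' →
    blockIdx lam (k : ℕ) = tc → blockIdx lam (k' : ℕ) = tc →
    centeredAt Js vs p (u k) → centeredAt Js vs p (u k') →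
    typeOf vs (u k) < typeOf vs (u k') →
    (typeOf vs (u k') < typeOf vs (u j') ∨
      (k' = j' ∧ typeOf vs (u k) ≤ typeOf vs (u j)))

/-- The number `b` of paths of `π` which enter the factor `G_{J_p}` between
the paths from sources `i` and `i'`, and which also leave `G_{J_p}` between
the same two paths. -/
def betweenNum {n m : ℕ} (Js : Fin m → Fin n × Fin n) (vs : Fin m → Perm (Fin n))
    (p : Fin m) (i i' : Fin n) : ℕ :=
  ((univ : Finset (Fin n)).filter fun x =>
    x ≠ i ∧ x ≠ i' ∧ centeredAt Js vs p x ∧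
      (min (posAt vs p i) (posAt vs p i') < posAt vs p x ∧
        posAt vs p x < max (posAt vs p i) (posAt vs p i')) ∧
      (min (posAt vs (p.1 + 1) i) (posAt vs (p.1 + 1) i') < posAt vs (p.1 + 1) x ∧
        posAt vs (p.1 + 1) x < max (posAt vs (p.1 + 1) i) (posAt vs (p.1 + 1) i'))).card

end

/-!
The swap at the central vertex of `G_{J_p}` changes no path before factor `p` and, after it, only
exchanges the labels of `π_{u_j}` and `π_{u_{j'}}`. So a triple avoiding both paths is unaffected.
In a counted triple `(π_{u_j}, π_x, k)` the path `π_x` lies in column `tc` too, and again nothing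
changes: for `k < p` trivially; at `k = p` because `π_x` leaves the central vertex below both
swapped paths, its sink being smaller (choice of `j, j'`) and the order inside column `tc` being
frozen after `p` (choice of `p`); and for `k > p` because no two paths of column `tc` meet. The one triple that changes
is `(π_{u_j}, π_{u_{j'}}, p)`: its defectiveness depends only on the network before `p`, while its
crossing status flips.
-/

open Equiv Finset
open scoped Classical

lemma iff_min_max {α : Type*} [LinearOrder α] (R : α → α → Prop) {x y : α}
    (h : R y x ↔ R x y) : R (min x y) (max x y) ↔ R x y := by
  rcases le_total x y with hle | hle
  · rw [min_eq_left hle, max_eq_right hle]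
  · rw [min_eq_right hle, max_eq_left hle, h]

lemma card_filter_add_ite_eq_of_forall_ne {α : Type*} [Fintype α] [DecidableEq α]
    {P Q : α → Prop} [DecidablePred P] [DecidablePred Q] (e : α) (h : ∀ z ≠ e, P z ↔ Q z) :
    #{z | P z} + (if Q e then 1 else 0) = #{z | Q z} + (if P e then 1 else 0) := by
  have herase : ({z | P z} : Finset α).erase e = ({z | Q z} : Finset α).erase e := by
    ext z
    simp only [mem_erase, mem_filter, mem_univ, true_and]
    exact and_congr_right (h z)
  have hcard : ∀ (R : α → Prop) [DecidablePred R],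
      #{z | R z} = #(({z | R z} : Finset α).erase e) + if R e then 1 else 0 := by
    intro R _
    split_ifs with hR
    · exact (card_erase_add_one (by simpa using hR)).symm
    · rw [erase_eq_of_notMem (by simpa using hR), add_zero]
  rw [hcard P, hcard Q, herase]
  ring

section PathFamily

variable {n m : ℕ} (Js : Fin m → Fin n × Fin n) (vs : Fin m → Perm (Fin n))

lemma posAt_succ (k : ℕ) (hk : k < m) : posAt vs (k + 1) = vs ⟨k, hk⟩ * posAt vs k := by
  have hget : (List.ofFn vs)[k]? = some (vs ⟨k, hk⟩) := by simp [hk]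
  simp [posAt, List.take_add_one, hget]

lemma posAt_fin_succ (q : Fin m) : posAt vs (q.1 + 1) = vs q * posAt vs q :=
  posAt_succ vs q.1 q.isLt

lemma lt_iff_apply_lt_of_not_memJ {J : Fin n × Fin n} {f : Perm (Fin n)} (hf : inSJ J f)
    {c d : Fin n} (hd : ¬ memJ J d) : (c < d ↔ f c < d) ∧ (d < c ↔ d < f c) := by
  by_cases hc : memJ J c
  · have hfc : memJ J (f c) := by
      by_contra h
      have hfix : f (f c) = f c := by_contra fun h' => h (hf _ h')
      rw [f.injective hfix] at h
      exact h hc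
    simp only [memJ, not_and_or, not_le] at hc hfc hd
    rcases hd with hd | hd
    · exact ⟨iff_of_false (by order) (by order), iff_of_true (by order) (by order)⟩
    · exact ⟨iff_of_true (by order) (by order), iff_of_false (by order) (by order)⟩
  · rw [by_contra fun h => hc (hf c h)]
    exact ⟨Iff.rfl, Iff.rfl⟩

lemma meetAt_of_order_change (hvs : IsPathFamily Js vs) (q : Fin m) {x y : Fin n} (hxy : x ≠ y)
    (hflip : ¬ ((posAt vs q x < posAt vs q y) ↔
      (posAt vs (q.1 + 1) x < posAt vs (q.1 + 1) y))) :
    meetAt Js vs q x y := by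
  rw [posAt_fin_succ, Perm.mul_apply, Perm.mul_apply] at hflip
  set w := posAt vs q
  have hout : ∀ c, ¬ memJ (Js q) c → vs q c = c := fun c hc => by_contra fun h => hc (hvs q c h)
  by_cases hx : memJ (Js q) (w x) <;> by_cases hy : memJ (Js q) (w y)
  · have hne : w x ≠ w y := fun h => hxy (w.injective h)
    have hlt : (Js q).1 < (Js q).2 := by
      obtain ⟨hx1, hx2⟩ := hx; obtain ⟨hy1, hy2⟩ := hy
      rcases lt_or_gt_of_ne hne with h | h <;> order
    exact ⟨⟨hlt, hx⟩, hlt, hy⟩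
  · rw [hout _ hy] at hflip
    exact absurd (lt_iff_apply_lt_of_not_memJ (hvs q) hy).1 hflip
  · rw [hout _ hx] at hflip
    exact absurd (lt_iff_apply_lt_of_not_memJ (hvs q) hx).2 hflip
  · rw [hout _ hx, hout _ hy] at hflip
    exact absurd Iff.rfl hflip

end PathFamily

section ZetaSwap

variable {n m : ℕ} (Js : Fin m → Fin n × Fin n) (vs : Fin m → Perm (Fin n)) (p : Fin m)
  (i i' : Fin n)

lemma posAt_zetaSwap {k : ℕ} (hk : k ≤ m) :
    posAt (zetaSwap vs p i i') k =
      if k ≤ p.1 then posAt vs k else posAt vs k * Equiv.swap i i' := by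
  induction k with
  | zero => simp [posAt]
  | succ k ih =>
    have hkm : k < m := hk
    rw [posAt_succ _ k hkm, posAt_succ vs k hkm, ih hkm.le]
    rcases lt_trichotomy k p.1 with h | rfl | h
    · have hne : (⟨k, hkm⟩ : Fin m) ≠ p := Fin.ne_of_val_ne h.ne
      simp [zetaSwap, hne, h.le, Nat.succ_le_of_lt h]
    · simp only [zetaSwap, Fin.eta, if_true, le_refl, Nat.not_succ_le_self]
      rw [posAt_fin_succ, Equiv.swap_apply_apply, if_neg not_false]
      group
    · have hne : (⟨k, hkm⟩ : Fin m) ≠ p := Fin.ne_of_val_ne h.ne'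
      simp [zetaSwap, hne, h.not_ge, (Nat.lt_succ_of_lt h).not_ge, mul_assoc]

lemma posAt_zetaSwap_of_le {k : ℕ} (hk : k ≤ p.1) :
    posAt (zetaSwap vs p i i') k = posAt vs k := by
  rw [posAt_zetaSwap vs p i i' (hk.trans p.isLt.le), if_pos hk]

lemma posAt_zetaSwap_apply_of_lt {k : ℕ} (hpk : p.1 < k) (hk : k ≤ m) (x : Fin n) :
    posAt (zetaSwap vs p i i') k x = posAt vs k (Equiv.swap i i' x) := by
  rw [posAt_zetaSwap vs p i i' hk, if_neg hpk.not_ge, Perm.mul_apply]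

lemma posAt_zetaSwap_apply_of_fixed {k : ℕ} (hk : k ≤ m) {x : Fin n}
    (hx : Equiv.swap i i' x = x) : posAt (zetaSwap vs p i i') k x = posAt vs k x := by
  rcases le_or_gt k p.1 with h | h
  · rw [posAt_zetaSwap_of_le vs p i i' h]
  · rw [posAt_zetaSwap_apply_of_lt vs p i i' h hk, hx]

lemma centeredAt_zetaSwap_of_le {q : Fin m} (hq : q ≤ p) (x : Fin n) :
    centeredAt Js (zetaSwap vs p i i') q x ↔ centeredAt Js vs q x := by
  rw [centeredAt, centeredAt, posAt_zetaSwap_of_le vs p i i' hq]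

lemma meetAt_zetaSwap_of_le {q : Fin m} (hq : q ≤ p) (x y : Fin n) :
    meetAt Js (zetaSwap vs p i i') q x y ↔ meetAt Js vs q x y := by
  rw [meetAt, meetAt, centeredAt_zetaSwap_of_le Js vs p i i' hq,
    centeredAt_zetaSwap_of_le Js vs p i i' hq]

lemma meetAt_zetaSwap_of_lt {q : Fin m} (hq : p < q) (x y : Fin n) :
    meetAt Js (zetaSwap vs p i i') q x y ↔
      meetAt Js vs q (Equiv.swap i i' x) (Equiv.swap i i' y) := by
  simp only [meetAt, centeredAt, posAt_zetaSwap_apply_of_lt vs p i i' hq q.isLt.le]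

lemma crossingAt_zetaSwap_of_lt {q : Fin m} (hq : q < p) (x y : Fin n) :
    crossingAt Js (zetaSwap vs p i i') q x y ↔ crossingAt Js vs q x y := by
  rw [crossingAt, crossingAt, meetAt_zetaSwap_of_le Js vs p i i' hq.le,
    posAt_zetaSwap_of_le vs p i i' (Fin.le_def.mp hq.le),
    posAt_zetaSwap_of_le vs p i i' (Fin.lt_def.mp hq)]

lemma crossingAt_zetaSwap_of_fixed (q : Fin m) {x y : Fin n} (hx : Equiv.swap i i' x = x)
    (hy : Equiv.swap i i' y = y) :
    crossingAt Js (zetaSwap vs p i i') q x y ↔ crossingAt Js vs q x y := by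
  simp only [crossingAt, meetAt, centeredAt,
    posAt_zetaSwap_apply_of_fixed vs p i i' q.isLt.le hx,
    posAt_zetaSwap_apply_of_fixed vs p i i' q.isLt.le hy,
    posAt_zetaSwap_apply_of_fixed vs p i i' q.isLt hx,
    posAt_zetaSwap_apply_of_fixed vs p i i' q.isLt hy]

lemma crossBefore_zetaSwap_of_le {k : Fin m} (hk : k ≤ p) (x y : Fin n) :
    crossBefore Js (zetaSwap vs p i i') k x y = crossBefore Js vs k x y := by
  unfold crossBefore
  congr 1
  refine Finset.filter_congr fun q _ => and_congr_right fun hq => ?_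
  exact crossingAt_zetaSwap_of_lt Js vs p i i' (hq.trans_le hk) x y

lemma defectiveAt_zetaSwap_of_le {k : Fin m} (hk : k ≤ p) (x y : Fin n) :
    defectiveAt Js (zetaSwap vs p i i') k x y ↔ defectiveAt Js vs k x y := by
  rw [defectiveAt, defectiveAt, meetAt_zetaSwap_of_le Js vs p i i' hk,
    crossBefore_zetaSwap_of_le Js vs p i i' hk]

lemma defectiveAt_zetaSwap_of_fixed (k : Fin m) {x y : Fin n} (hx : Equiv.swap i i' x = x)
    (hy : Equiv.swap i i' y = y) :
    defectiveAt Js (zetaSwap vs p i i') k x y ↔ defectiveAt Js vs k x y := by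
  have hcross : crossBefore Js (zetaSwap vs p i i') k x y = crossBefore Js vs k x y := by
    unfold crossBefore
    congr 1
    exact Finset.filter_congr fun q _ =>
      and_congr_right fun _ => crossingAt_zetaSwap_of_fixed Js vs p i i' q hx hy
  simp only [defectiveAt, meetAt, centeredAt, hcross,
    posAt_zetaSwap_apply_of_fixed vs p i i' k.isLt.le hx,
    posAt_zetaSwap_apply_of_fixed vs p i i' k.isLt.le hy]

lemma crossingAt_zetaSwap_self (x y : Fin n) :
    crossingAt Js (zetaSwap vs p i i') p x y ↔ meetAt Js vs p x y ∧
      ¬ ((posAt vs p x < posAt vs p y) ↔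
        (posAt vs (p.1 + 1) (Equiv.swap i i' x) < posAt vs (p.1 + 1) (Equiv.swap i i' y))) := by
  rw [crossingAt, meetAt_zetaSwap_of_le Js vs p i i' le_rfl,
    posAt_zetaSwap_of_le vs p i i' le_rfl,
    posAt_zetaSwap_apply_of_lt vs p i i' (Nat.lt_succ_self _) p.isLt,
    posAt_zetaSwap_apply_of_lt vs p i i' (Nat.lt_succ_self _) p.isLt]

end ZetaSwap

section Symmetry

variable {n m : ℕ} (Js : Fin m → Fin n × Fin n) (vs : Fin m → Perm (Fin n))

lemma crossingAt_comm (q : Fin m) {x y : Fin n} (hxy : x ≠ y) :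
    crossingAt Js vs q y x ↔ crossingAt Js vs q x y := by
  have hq := (posAt vs q).injective.ne hxy
  have hq' := (posAt vs (q.1 + 1)).injective.ne hxy
  rw [crossingAt, crossingAt, meetAt, meetAt, and_comm (a := centeredAt Js vs q y),
    ← hq.symm.le_iff_lt, ← hq'.symm.le_iff_lt, ← not_lt, ← not_lt, not_iff_not]

lemma crossBefore_comm (k : Fin m) {x y : Fin n} (hxy : x ≠ y) :
    crossBefore Js vs k y x = crossBefore Js vs k x y := by
  unfold crossBefore
  congr 1
  exact Finset.filter_congr fun q _ => and_congr_right fun _ => crossingAt_comm Js vs q hxy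

lemma defectiveAt_comm (k : Fin m) {x y : Fin n} (hxy : x ≠ y) :
    defectiveAt Js vs k y x ↔ defectiveAt Js vs k x y := by
  rw [defectiveAt, defectiveAt, crossBefore_comm Js vs k hxy, meetAt, meetAt,
    and_comm (a := centeredAt Js vs k y)]

end Symmetry

section ZetaSwapAtFactor

variable {n m : ℕ} (Js : Fin m → Fin n × Fin n) (vs : Fin m → Perm (Fin n)) (p : Fin m)
  {i i' : Fin n}

lemma crossingAt_zetaSwap_self_swapped (hii' : i ≠ i') :
    crossingAt Js (zetaSwap vs p i i') p i i' ↔ meetAt Js vs p i i' ∧ ¬ crossingAt Js vs p i i' := by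
  have hne := (posAt vs (p.1 + 1)).injective.ne hii'
  rw [crossingAt_zetaSwap_self, swap_apply_left, swap_apply_right, crossingAt,
    ← hne.le_iff_lt, ← not_lt]
  tauto

lemma crossingAt_zetaSwap_self_of_not_between {x y : Fin n} (hx : x = i ∨ x = i')
    (hyi : y ≠ i) (hyi' : y ≠ i')
    (hside : posAt vs (p.1 + 1) i < posAt vs (p.1 + 1) y ↔
      posAt vs (p.1 + 1) i' < posAt vs (p.1 + 1) y) :
    crossingAt Js (zetaSwap vs p i i') p x y ↔ crossingAt Js vs p x y := by
  rw [crossingAt_zetaSwap_self, swap_apply_of_ne_of_ne hyi hyi', crossingAt]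
  rcases hx with rfl | rfl
  · rw [swap_apply_left, hside]
  · rw [swap_apply_right, hside]

end ZetaSwapAtFactor

lemma colOf_swap_apply {n : ℕ} {lam : List ℕ} {u : Perm (Fin n)} {i i' : Fin n}
    (h : colOf lam u i = colOf lam u i') (x : Fin n) :
    colOf lam u (Equiv.swap i i' x) = colOf lam u x := by
  rw [swap_apply_def]
  split_ifs with h1 h2
  · rw [h1, h]
  · rw [h2, h]
  · rfl

def IsColDefectiveNoncrossing {n m : ℕ} (Js : Fin m → Fin n × Fin n)
    (vs : Fin m → Perm (Fin n)) (col : Fin n → ℕ) (z : (Fin n × Fin n) × Fin m) : Prop :=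
  z.1.1 < z.1.2 ∧ defectiveAt Js vs z.2 z.1.1 z.1.2 ∧ ¬ crossingAt Js vs z.2 z.1.1 z.1.2 ∧
    col z.1.1 = col z.1.2

lemma cdncrossNum_eq_card {n m : ℕ} (Js : Fin m → Fin n × Fin n) (vs : Fin m → Perm (Fin n))
    (col : Fin n → ℕ) :
    cdncrossNum Js vs col = #{z | IsColDefectiveNoncrossing Js vs col z} := by
  simp only [cdncrossNum, IsColDefectiveNoncrossing]
  congr

namespace ZetaData

variable {n m : ℕ} {Js : Fin m → Fin n × Fin n} {lam : List ℕ} {u : Perm (Fin n)}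
  {vs : Fin m → Perm (Fin n)} (Z : ZetaData Js lam u vs)

lemma colOf_j : colOf lam u (u Z.j) = Z.tc := by simp [colOf, Z.hjcol]

lemma colOf_j' : colOf lam u (u Z.j') = Z.tc := by simp [colOf, Z.hjcol']

lemma not_meetAt_of_lt {q : Fin m} (hq : Z.p < q) {x y : Fin n} (hxy : x ≠ y)
    (hx : colOf lam u x = Z.tc) (hy : colOf lam u y = Z.tc) : ¬ meetAt Js vs q x y :=
  fun hmeet => Z.hpMax q hq ⟨x, y, hxy, hx, hy, hmeet⟩

lemma posAt_lt_iff_typeOf_lt (hvs : IsPathFamily Js vs) {x y : Fin n} (hxy : x ≠ y)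
    (hx : colOf lam u x = Z.tc) (hy : colOf lam u y = Z.tc) :
    posAt vs (Z.p.1 + 1) x < posAt vs (Z.p.1 + 1) y ↔ typeOf vs x < typeOf vs y := by
  suffices ∀ k, Z.p.1 + 1 ≤ k → k ≤ m →
      (posAt vs (Z.p.1 + 1) x < posAt vs (Z.p.1 + 1) y ↔ posAt vs k x < posAt vs k y) from
    this m Z.p.isLt le_rfl
  intro k hk hkm
  induction k, hk using Nat.le_induction with
  | base => rfl
  | succ k hk ih =>
    refine (ih (Nat.le_of_succ_le hkm)).trans (not_not.mp fun hflip => ?_)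
    exact Z.not_meetAt_of_lt (q := ⟨k, hkm⟩) (Fin.lt_def.mpr hk) hxy hx hy
      (meetAt_of_order_change Js vs hvs ⟨k, hkm⟩ hxy hflip)

lemma typeOf_lt_typeOf_j {x : Fin n} (hxi : x ≠ u Z.j) (hxi' : x ≠ u Z.j')
    (hx : colOf lam u x = Z.tc) (hcent : centeredAt Js vs Z.p x) :
    typeOf vs x < typeOf vs (u Z.j) := by
  set k := u⁻¹ x
  have hux : u k = x := u.apply_symm_apply x
  have hk : blockIdx lam (k : ℕ) = Z.tc := hx
  have hkj : k ≠ Z.j := fun h => hxi (by rw [← hux, h])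
  have hkj' : k ≠ Z.j' := fun h => hxi' (by rw [← hux, h])
  have hne : ∀ {a b : Fin n}, u a ≠ u b → typeOf vs (u a) ≠ typeOf vs (u b) :=
    fun h => (typeOf vs).injective.ne h
  rw [← hux] at hcent ⊢
  have hlt' : typeOf vs (u k) < typeOf vs (u Z.j') := by
    refine (hne (u.injective.ne hkj')).lt_or_gt.resolve_right fun hgt => ?_
    rcases Z.hmax Z.j' k hkj'.symm Z.hjcol' hk Z.hjcent' hcent hgt with h | ⟨h, -⟩
    · exact lt_asymm h hgt
    · exact hkj' h
  rcases Z.hmax k Z.j' hkj' hk Z.hjcol' hcent Z.hjcent' hlt' with h | ⟨-, h⟩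
  · exact absurd h (lt_irrefl _)
  · exact h.lt_of_ne (hne (u.injective.ne hkj))

lemma crossingAt_zetaSwap_self_of_mem (hvs : IsPathFamily Js vs) {x y : Fin n}
    (hx : x = u Z.j ∨ x = u Z.j') (hyi : y ≠ u Z.j) (hyi' : y ≠ u Z.j')
    (hy : colOf lam u y = Z.tc) (hcent : centeredAt Js vs Z.p y) :
    crossingAt Js (zetaSwap vs Z.p (u Z.j) (u Z.j')) Z.p x y ↔ crossingAt Js vs Z.p x y := by
  have hsink := Z.typeOf_lt_typeOf_j hyi hyi' hy hcent
  have hi := (Z.posAt_lt_iff_typeOf_lt hvs hyi hy Z.colOf_j).mpr hsink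
  have hi' := (Z.posAt_lt_iff_typeOf_lt hvs hyi' hy Z.colOf_j').mpr (hsink.trans Z.hord)
  exact crossingAt_zetaSwap_self_of_not_between Js vs Z.p hx hyi hyi'
    (iff_of_false hi.not_gt hi'.not_gt)

lemma not_meetAt_zetaSwap_of_lt {q : Fin m} (hq : Z.p < q) {x y : Fin n} (hxy : x ≠ y)
    (hx : colOf lam u x = Z.tc) (hy : colOf lam u y = Z.tc) :
    ¬ meetAt Js (zetaSwap vs Z.p (u Z.j) (u Z.j')) q x y := by
  have hcol := colOf_swap_apply (Z.colOf_j.trans Z.colOf_j'.symm)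
  rw [meetAt_zetaSwap_of_lt Js vs Z.p _ _ hq]
  exact Z.not_meetAt_of_lt hq ((Equiv.injective _).ne hxy) (by rw [hcol, hx]) (by rw [hcol, hy])

lemma defectiveNoncrossing_zetaSwap_iff_of_ne {k : Fin m} (hk : k ≠ Z.p) {x y : Fin n}
    (hxy : x ≠ y) (hx : colOf lam u x = Z.tc) (hy : colOf lam u y = Z.tc) :
    (defectiveAt Js (zetaSwap vs Z.p (u Z.j) (u Z.j')) k x y ∧
        ¬ crossingAt Js (zetaSwap vs Z.p (u Z.j) (u Z.j')) k x y) ↔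
      (defectiveAt Js vs k x y ∧ ¬ crossingAt Js vs k x y) := by
  rcases hk.lt_or_gt with hk | hk
  · rw [defectiveAt_zetaSwap_of_le Js vs Z.p _ _ hk.le, crossingAt_zetaSwap_of_lt Js vs Z.p _ _ hk]
  · simp [defectiveAt, Z.not_meetAt_of_lt hk hxy hx hy, Z.not_meetAt_zetaSwap_of_lt hk hxy hx hy]

lemma defectiveNoncrossing_zetaSwap_iff_of_mem (hvs : IsPathFamily Js vs) (k : Fin m)
    {x y : Fin n} (hxy : x ≠ y) (hx : x = u Z.j ∨ x = u Z.j') (hyi : y ≠ u Z.j)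
    (hyi' : y ≠ u Z.j') (hcol : colOf lam u x = colOf lam u y) :
    (defectiveAt Js (zetaSwap vs Z.p (u Z.j) (u Z.j')) k x y ∧
        ¬ crossingAt Js (zetaSwap vs Z.p (u Z.j) (u Z.j')) k x y) ↔
      (defectiveAt Js vs k x y ∧ ¬ crossingAt Js vs k x y) := by
  have hxtc : colOf lam u x = Z.tc := by rcases hx with rfl | rfl; exacts [Z.colOf_j, Z.colOf_j']
  have hytc : colOf lam u y = Z.tc := hcol ▸ hxtc
  by_cases hk : k = Z.p
  · subst hk
    rw [defectiveAt_zetaSwap_of_le Js vs Z.p _ _ le_rfl]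
    by_cases hmeet : meetAt Js vs Z.p x y
    · rw [Z.crossingAt_zetaSwap_self_of_mem hvs hx hyi hyi' hytc hmeet.2]
    · simp [defectiveAt, hmeet]
  · exact Z.defectiveNoncrossing_zetaSwap_iff_of_ne hk hxy hxtc hytc

lemma isColDefectiveNoncrossing_zetaSwap_iff_of_ne (hvs : IsPathFamily Js vs)
    {z : (Fin n × Fin n) × Fin m}
    (hz : z ≠ ((min (u Z.j) (u Z.j'), max (u Z.j) (u Z.j')), Z.p)) :
    IsColDefectiveNoncrossing Js (zetaSwap vs Z.p (u Z.j) (u Z.j')) (colOf lam u) z ↔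
      IsColDefectiveNoncrossing Js vs (colOf lam u) z := by
  obtain ⟨⟨x, y⟩, k⟩ := z
  simp only [IsColDefectiveNoncrossing, and_congr_right_iff]
  intro hxy
  simp only [← and_assoc, and_congr_left_iff]
  intro hcol
  by_cases hx : x = u Z.j ∨ x = u Z.j' <;> by_cases hy : y = u Z.j ∨ y = u Z.j'
  · have hk : k ≠ Z.p := by
      rcases hx with rfl | rfl <;> rcases hy with rfl | rfl
      · exact absurd hxy (lt_irrefl _)
      · simpa [min_eq_left hxy.le, max_eq_right hxy.le] using hz
      · simpa [min_eq_right hxy.le, max_eq_left hxy.le] using hz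
      · exact absurd hxy (lt_irrefl _)
    have hcol_j : ∀ w, w = u Z.j ∨ w = u Z.j' → colOf lam u w = Z.tc := by
      rintro w (rfl | rfl); exacts [Z.colOf_j, Z.colOf_j']
    exact Z.defectiveNoncrossing_zetaSwap_iff_of_ne hk hxy.ne (hcol_j x hx) (hcol_j y hy)
  · rw [not_or] at hy
    exact Z.defectiveNoncrossing_zetaSwap_iff_of_mem hvs k hxy.ne hx hy.1 hy.2 hcol
  · rw [not_or] at hx
    rw [← defectiveAt_comm _ _ k hxy.ne, ← crossingAt_comm _ _ k hxy.ne,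
      ← defectiveAt_comm _ _ k hxy.ne, ← crossingAt_comm _ _ k hxy.ne]
    exact Z.defectiveNoncrossing_zetaSwap_iff_of_mem hvs k hxy.ne' hy hx.1 hx.2 hcol.symm
  · rw [not_or] at hx hy
    rw [defectiveAt_zetaSwap_of_fixed Js vs _ _ _ k (swap_apply_of_ne_of_ne hx.1 hx.2)
        (swap_apply_of_ne_of_ne hy.1 hy.2),
      crossingAt_zetaSwap_of_fixed Js vs _ _ _ k (swap_apply_of_ne_of_ne hx.1 hx.2)
        (swap_apply_of_ne_of_ne hy.1 hy.2)]

lemma isColDefectiveNoncrossing_swapped_iff :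
    IsColDefectiveNoncrossing Js vs (colOf lam u)
        ((min (u Z.j) (u Z.j'), max (u Z.j) (u Z.j')), Z.p) ↔
      Odd (crossBefore Js vs Z.p (u Z.j) (u Z.j')) ∧ ¬ crossingAt Js vs Z.p (u Z.j) (u Z.j') := by
  have hne : u Z.j ≠ u Z.j' := u.injective.ne Z.hne
  rw [IsColDefectiveNoncrossing, iff_true_intro (min_lt_max.mpr hne), true_and,
    iff_min_max (fun a b => defectiveAt Js vs Z.p a b ∧ ¬ crossingAt Js vs Z.p a b ∧
      colOf lam u a = colOf lam u b)
      (by rw [defectiveAt_comm _ _ _ hne, crossingAt_comm _ _ _ hne, eq_comm])]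
  simp [defectiveAt, meetAt, Z.hjcent, Z.hjcent', Z.colOf_j, Z.colOf_j']

lemma isColDefectiveNoncrossing_zetaSwap_swapped_iff :
    IsColDefectiveNoncrossing Js (zetaSwap vs Z.p (u Z.j) (u Z.j')) (colOf lam u)
        ((min (u Z.j) (u Z.j'), max (u Z.j) (u Z.j')), Z.p) ↔
      Odd (crossBefore Js vs Z.p (u Z.j) (u Z.j')) ∧ crossingAt Js vs Z.p (u Z.j) (u Z.j') := by
  have hne : u Z.j ≠ u Z.j' := u.injective.ne Z.hne
  set vh := zetaSwap vs Z.p (u Z.j) (u Z.j')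
  rw [IsColDefectiveNoncrossing, iff_true_intro (min_lt_max.mpr hne), true_and,
    iff_min_max (fun a b => defectiveAt Js vh Z.p a b ∧ ¬ crossingAt Js vh Z.p a b ∧
      colOf lam u a = colOf lam u b)
      (by rw [defectiveAt_comm _ _ _ hne, crossingAt_comm _ _ _ hne, eq_comm])]
  simp only [vh, defectiveAt_zetaSwap_of_le Js vs Z.p (u Z.j) (u Z.j') le_rfl,
    crossingAt_zetaSwap_self_swapped Js vs Z.p hne]
  simp [defectiveAt, meetAt, Z.hjcent, Z.hjcent', Z.colOf_j, Z.colOf_j']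

lemma cdncrossNum_zetaSwap_add_ite (hvs : IsPathFamily Js vs) :
    cdncrossNum Js (zetaSwap vs Z.p (u Z.j) (u Z.j')) (colOf lam u) +
        (if Odd (crossBefore Js vs Z.p (u Z.j) (u Z.j')) ∧
          ¬ crossingAt Js vs Z.p (u Z.j) (u Z.j') then 1 else 0) =
      cdncrossNum Js vs (colOf lam u) +
        (if Odd (crossBefore Js vs Z.p (u Z.j) (u Z.j')) ∧
          crossingAt Js vs Z.p (u Z.j) (u Z.j') then 1 else 0) := by
  have h := card_filter_add_ite_eq_of_forall_ne _
    fun z hz => Z.isColDefectiveNoncrossing_zetaSwap_iff_of_ne hvs hz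
  simpa only [cdncrossNum_eq_card, Z.isColDefectiveNoncrossing_swapped_iff,
    Z.isColDefectiveNoncrossing_zetaSwap_swapped_iff] using h

end ZetaData

theorem zeta_move_cdncross_change_general
    {n m : ℕ} (Js : Fin m → Fin n × Fin n)
    (lam : List ℕ)
    (u : Perm (Fin n))
    (vs : Fin m → Perm (Fin n)) (hvs : IsPathFamily Js vs)
    (Z : ZetaData Js lam u vs) :
    (¬ Odd (crossBefore Js vs Z.p (u Z.j) (u Z.j')) →
      cdncrossNum Js (zetaSwap vs Z.p (u Z.j) (u Z.j')) (colOf lam u) =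
        cdncrossNum Js vs (colOf lam u)) ∧
    (Odd (crossBefore Js vs Z.p (u Z.j) (u Z.j')) ∧
        ¬ crossingAt Js vs Z.p (u Z.j) (u Z.j') →
      cdncrossNum Js (zetaSwap vs Z.p (u Z.j) (u Z.j')) (colOf lam u) + 1 =
        cdncrossNum Js vs (colOf lam u)) ∧
    (Odd (crossBefore Js vs Z.p (u Z.j) (u Z.j')) ∧
        crossingAt Js vs Z.p (u Z.j) (u Z.j') →
      cdncrossNum Js (zetaSwap vs Z.p (u Z.j) (u Z.j')) (colOf lam u) =
        cdncrossNum Js vs (colOf lam u) + 1) := by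
  have h := Z.cdncrossNum_zetaSwap_add_ite hvs
  refine ⟨fun hodd => ?_, fun ⟨hodd, hcross⟩ => ?_, fun ⟨hodd, hcross⟩ => ?_⟩
  · simpa [hodd] using h
  · simpa [hodd, hcross] using h
  · simpa [hodd, hcross] using h

/-- Lemma 5.3, identity (5.8) / `l:statids`,
`eq:cdncrossid`.  Let `W = δ(U(π,u,yu)) ∈ T_I(G)` with
`ζ(W) = δ(U(π̂,u,ŷu)) ≠ W`, where the `ζ`-move (recorded by `Z`) swaps the
terminal subpaths of `π_{u_j}, π_{u_{j'}}` at the central vertex of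
`G_{J_p}`.  Then `cdncross(ζ(W)) = cdncross(W)` if the triple
`(π_{u_j}, π_{u_{j'}}, p)` is proper, `cdncross(ζ(W)) = cdncross(W) − 1` if
it is a defective noncrossing, and `cdncross(ζ(W)) = cdncross(W) + 1` if it
is a defective crossing (the columns of both tableaux being given by
`colOf lam u`). -/
theorem zeta_move_cdncross_change
    {n m : ℕ} (Js : Fin m → Fin n × Fin n) (hJs : ∀ p, (Js p).1 ≤ (Js p).2)
    (lam : List ℕ) (hsum : lam.sum = n) (hpos : ∀ x ∈ lam, 0 < x)
    (hsort : lam.Pairwise (fun a b => b ≤ a))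
    (u : Perm (Fin n))
    (hu : ∀ i j : Fin n, i < j →
      blockIdx lam (i : ℕ) = blockIdx lam (j : ℕ) → u i < u j)
    (vs : Fin m → Perm (Fin n)) (hvs : IsPathFamily Js vs)
    (y : Perm (Fin n)) (hy : inYoung lam y)
    (hty : typeOf vs = u * y * u⁻¹)
    (Z : ZetaData Js lam u vs) :
    (¬ Odd (crossBefore Js vs Z.p (u Z.j) (u Z.j')) →
      cdncrossNum Js (zetaSwap vs Z.p (u Z.j) (u Z.j')) (colOf lam u) =
        cdncrossNum Js vs (colOf lam u)) ∧
    (Odd (crossBefore Js vs Z.p (u Z.j) (u Z.j')) ∧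
        ¬ crossingAt Js vs Z.p (u Z.j) (u Z.j') →
      cdncrossNum Js (zetaSwap vs Z.p (u Z.j) (u Z.j')) (colOf lam u) + 1 =
        cdncrossNum Js vs (colOf lam u)) ∧
    (Odd (crossBefore Js vs Z.p (u Z.j) (u Z.j')) ∧
        crossingAt Js vs Z.p (u Z.j) (u Z.j') →
      cdncrossNum Js (zetaSwap vs Z.p (u Z.j) (u Z.j')) (colOf lam u) =
        cdncrossNum Js vs (colOf lam u) + 1) :=
  zeta_move_cdncross_change_general Js lam u vs hvs Z
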